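/- arXiv:2002.01536 — 7 statements merged into one kernel-verified Lean document; each statement's English description precedes it below -/
import Mathlib

section
/- For every M with 0 < M < 1 there exists a unique t₁ > 0 such that 8 · Σ_{k=0}^∞ (1 − e^{−(2k+1)²π² t₁}) / ((2k+1)²π²) = M. -/
open Real Set

/-- The total mass `μ(t) = 8 ∑_{k=0}^∞ (1 - e^{-(2k+1)²π² t}) / ((2k+1)²π²)` of the
solution of the heat equation with zero initial data and unit boundary values. -/
noncomputable def totalMass (t : ℝ) : ℝ :=
  8 * ∑' k : ℕ, (1 - Real.exp (-((2 * (k : ℝ) + 1) ^ 2 * Real.pi ^ 2) * t)) /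
    ((2 * (k : ℝ) + 1) ^ 2 * Real.pi ^ 2)

namespace FirstSwitch

noncomputable def A (k : ℕ) : ℝ := (2 * (k : ℝ) + 1) ^ 2 * Real.pi ^ 2

lemma A_pos (k : ℕ) : 0 < A k := by unfold A; positivity

lemma A_ge (k : ℕ) : Real.pi ^ 2 ≤ A k := by
  unfold A
  have hk : (0:ℝ) ≤ (k:ℝ) := Nat.cast_nonneg k
  have h1 : (1:ℝ) ≤ (2*(k:ℝ)+1)^2 := by nlinarith
  nlinarith [Real.pi_pos, sq_nonneg Real.pi]

lemma hasSum_invA : HasSum (fun k : ℕ => 1 / A k) (1/8) := by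
  have hf : HasSum (fun n : ℕ => 1 / (n:ℝ)^2) (Real.pi^2/6) := hasSum_zeta_two
  have heven : HasSum (fun k : ℕ => 1 / ((2*k : ℕ):ℝ)^2) (Real.pi^2/24) := by
    have h := hf.div_const 4
    have he : (fun k : ℕ => 1 / ((2*k : ℕ):ℝ)^2) = fun k : ℕ => 1 / (k:ℝ)^2 / 4 := by
      funext k; push_cast; ring
    have hv : (Real.pi^2/24 : ℝ) = Real.pi^2/6/4 := by ring
    rw [he, hv]
    exact h
  have hsodd : Summable (fun k : ℕ => 1 / ((2*k+1 : ℕ):ℝ)^2) := by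
    have hinj : Function.Injective (fun k : ℕ => 2*k+1) := by
      intro a b h; simp only [] at h; omega
    exact hf.summable.comp_injective hinj
  have hodd := hsodd.hasSum
  have htot := HasSum.even_add_odd (f := fun n : ℕ => 1 / (n:ℝ)^2) heven hodd
  have hval : ∑' k : ℕ, 1 / ((2*k+1 : ℕ):ℝ)^2 = Real.pi^2/8 := by
    have := hf.unique htot
    linarith
  rw [hval] at hodd
  have hpi : Real.pi ^ 2 ≠ 0 := by positivity
  have h2 := hodd.div_const (Real.pi^2)
  have he2 : (fun k : ℕ => 1 / ((2*k+1 : ℕ):ℝ)^2 / Real.pi^2) = fun k : ℕ => 1 / A k := by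
    funext k; unfold A; push_cast; field_simp
  rw [he2] at h2
  have hv2 : Real.pi^2/8/Real.pi^2 = (1/8 : ℝ) := by field_simp
  rw [hv2] at h2
  exact h2

lemma summable_invA : Summable (fun k : ℕ => 1 / A k) := hasSum_invA.summable

noncomputable def g (k : ℕ) (t : ℝ) : ℝ := (1 - Real.exp (-(A k) * t)) / A k

lemma totalMass_eq (t : ℝ) : totalMass t = 8 * ∑' k : ℕ, g k t := rfl

lemma g_nonneg {k : ℕ} {t : ℝ} (ht : 0 ≤ t) : 0 ≤ g k t := by
  have h : Real.exp (-(A k) * t) ≤ 1 := by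
    rw [← Real.exp_zero]
    exact Real.exp_le_exp.mpr (by nlinarith [A_pos k])
  exact div_nonneg (by linarith) (A_pos k).le

lemma g_le (k : ℕ) (t : ℝ) : g k t ≤ 1 / A k := by
  unfold g
  rw [div_le_div_iff₀ (A_pos k) (A_pos k)]
  nlinarith [Real.exp_pos (-(A k) * t), A_pos k]

lemma summable_g {t : ℝ} (ht : 0 ≤ t) : Summable (fun k : ℕ => g k t) :=
  Summable.of_nonneg_of_le (fun k => g_nonneg ht) (fun k => g_le k t) summable_invA

lemma totalMass_zero : totalMass 0 = 0 := by
  rw [totalMass_eq]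
  have h : (fun k : ℕ => g k 0) = fun _ => (0:ℝ) := by
    funext k; unfold g; simp
  rw [h, tsum_zero, mul_zero]

lemma strictMono : StrictMonoOn totalMass (Ici 0) := by
  intro s hs t ht hst
  rw [totalMass_eq, totalMass_eq]
  have hle : (fun k : ℕ => g k s) ≤ fun k : ℕ => g k t := by
    intro k
    unfold g
    have h := Real.exp_le_exp.mpr (show -(A k) * t ≤ -(A k) * s by nlinarith [A_pos k])
    rw [div_le_div_iff₀ (A_pos k) (A_pos k)]
    nlinarith [A_pos k]
  have hlt : g 0 s < g 0 t := by
    unfold g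
    have h := Real.exp_lt_exp.mpr (show -(A 0) * t < -(A 0) * s by nlinarith [A_pos 0])
    rw [div_lt_div_iff₀ (A_pos 0) (A_pos 0)]
    nlinarith [A_pos 0]
  have := Summable.tsum_lt_tsum hle hlt (summable_g hs) (summable_g (le_trans hs hst.le))
  linarith

lemma contOn : ContinuousOn totalMass (Ici 0) := by
  have h : ContinuousOn (fun t => ∑' k : ℕ, g k t) (Ici (0:ℝ)) := by
    rw [continuousOn_iff_continuous_restrict]
    have := continuous_tsum (f := fun (k : ℕ) (x : Ici (0:ℝ)) => g k x.val)
      (u := fun k => 1 / A k)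
      (fun k => by
        unfold g
        exact (continuous_const.sub ((continuous_const.mul continuous_subtype_val).rexp)).div_const (A k))
      summable_invA
      (fun k x => by
        rw [Real.norm_eq_abs, abs_of_nonneg (g_nonneg x.2)]
        exact g_le k x.val)
    exact this
  exact continuousOn_const.mul h

lemma lower_bound {t : ℝ} (ht : 0 ≤ t) : 1 - Real.exp (-Real.pi^2 * t) ≤ totalMass t := by
  have hsum_e : Summable (fun k : ℕ => Real.exp (-(A k)*t)/A k) := by
    apply Summable.of_nonneg_of_le
      (fun k => div_nonneg (Real.exp_pos _).le (A_pos k).le)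
      (fun k => ?_) summable_invA
    have : Real.exp (-(A k)*t) ≤ 1 := by
      rw [← Real.exp_zero]; exact Real.exp_le_exp.mpr (by nlinarith [A_pos k])
    rw [div_le_div_iff₀ (A_pos k) (A_pos k)]
    nlinarith [A_pos k]
  have hsplit : ∑' k : ℕ, g k t = ∑' k : ℕ, (1/A k) - ∑' k : ℕ, Real.exp (-(A k)*t)/A k := by
    rw [← Summable.tsum_sub summable_invA hsum_e]
    congr 1
    funext k
    unfold g
    rw [sub_div]
  have hsumr : Summable (fun k : ℕ => Real.exp (-Real.pi^2*t) * (1/A k)) :=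
    summable_invA.mul_left _
  have hterm : ∀ k : ℕ, Real.exp (-(A k)*t)/A k ≤ Real.exp (-Real.pi^2*t) * (1/A k) := by
    intro k
    rw [div_eq_mul_one_div]
    exact mul_le_mul_of_nonneg_right
      (Real.exp_le_exp.mpr (by nlinarith [A_ge k]))
      (one_div_nonneg.mpr (A_pos k).le)
  have hbound : ∑' k : ℕ, Real.exp (-(A k)*t)/A k ≤ Real.exp (-Real.pi^2*t) * (1/8) := by
    calc ∑' k : ℕ, Real.exp (-(A k)*t)/A k
        ≤ ∑' k : ℕ, Real.exp (-Real.pi^2*t) * (1/A k) := Summable.tsum_le_tsum hterm hsum_e hsumr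
      _ = Real.exp (-Real.pi^2*t) * ∑' k : ℕ, (1/A k) := tsum_mul_left
      _ = Real.exp (-Real.pi^2*t) * (1/8) := by rw [hasSum_invA.tsum_eq]
  rw [totalMass_eq, hsplit, hasSum_invA.tsum_eq]
  linarith

end FirstSwitch

open FirstSwitch in
/-- For every `0 < M < 1` there is a unique time `t₁ > 0` at which the total mass equals `M`. -/
theorem exists_unique_first_switch :
    ∀ M : ℝ, 0 < M → M < 1 →
      ∃! t₁ : ℝ, 0 < t₁ ∧ totalMass t₁ = M := by
  intro M hM0 hM1
  set T : ℝ := max 1 (-Real.log ((1-M)/2)) with hT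
  have hT1 : (1:ℝ) ≤ T := le_max_left _ _
  have hT0 : (0:ℝ) ≤ T := by linarith
  have hexp : Real.exp (-Real.pi^2 * T) ≤ (1-M)/2 := by
    have hpi2 : (1:ℝ) ≤ Real.pi^2 := by nlinarith [Real.pi_gt_three]
    have h1 : -Real.pi^2 * T ≤ -T := by nlinarith [mul_nonneg (by linarith : (0:ℝ) ≤ Real.pi^2 - 1) hT0]
    have h2 : -T ≤ Real.log ((1-M)/2) := by
      have := le_max_right 1 (-Real.log ((1-M)/2))
      linarith
    calc Real.exp (-Real.pi^2 * T) ≤ Real.exp (Real.log ((1-M)/2)) :=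
          Real.exp_le_exp.mpr (h1.trans h2)
      _ = (1-M)/2 := Real.exp_log (by linarith)
  have hTM : M < totalMass T := by
    have := lower_bound hT0
    linarith
  have hiv := intermediate_value_Ioo hT0 (contOn.mono (fun x hx => hx.1))
  have hmem : M ∈ Ioo (totalMass 0) (totalMass T) := by
    rw [totalMass_zero]; exact ⟨hM0, hTM⟩
  obtain ⟨t₁, ht₁, hval⟩ := hiv hmem
  refine ⟨t₁, ⟨ht₁.1, hval⟩, ?_⟩
  rintro s ⟨hs0, hsval⟩
  have := strictMono.injOn (le_of_lt hs0 : s ∈ Ici 0) (ht₁.1.le : t₁ ∈ Ici 0)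
  exact this (by rw [hsval, hval])
end

section
/- Let 0 < m < M < 1, let t₁ > 0 be the unique solution of 8 · Σ_{k=0}^∞ (1 − e^{−(2k+1)²π² t₁})/((2k+1)²π²) = M. Then there exists a unique t₂ > t₁ such that 8 · Σ_{k=0}^∞ e^{−(2k+1)²π² t₂}(e^{(2k+1)²π² t₁} − 1)/((2k+1)²π²) = m. -/
/-- The total mass after the boundary value is switched off at time `t₁`. -/
noncomputable def decayMass (t₁ t : ℝ) : ℝ :=
  8 * ∑' k : ℕ,
    Real.exp (-((2 * (k : ℝ) + 1) ^ 2 * Real.pi ^ 2) * t) *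
      (Real.exp (((2 * (k : ℝ) + 1) ^ 2 * Real.pi ^ 2) * t₁) - 1) /
    ((2 * (k : ℝ) + 1) ^ 2 * Real.pi ^ 2)
/-!
After the switch every odd Fourier mode decays at its own rate `(λ_{2k+1})² ≥ π²`, so the mass
is an exponential sum `s ↦ ∑ₖ e^{-(λ_{2k+1})² s} cₖ` in `s = t - t₁` with nonnegative weights
`cₖ` adding up to `M`. Such a sum is continuous, strictly decreasing, and bounded by
`e^{-π² s} M`; hence it takes the value `m ∈ (0, M)` exactly once for `s > 0`.
-/

open Real Set Filter Topology

noncomputable section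

def expSum (r c : ℕ → ℝ) (s : ℝ) : ℝ := ∑' k, exp (-r k * s) * c k

namespace expSum

variable {r c : ℕ → ℝ} {r₀ s : ℝ}

lemma term_le (hr : ∀ k, r₀ ≤ r k) (hc : ∀ k, 0 ≤ c k) (hs : 0 ≤ s) (k : ℕ) :
    exp (-r k * s) * c k ≤ exp (-r₀ * s) * c k :=
  mul_le_mul_of_nonneg_right (exp_le_exp.2 (by nlinarith [hr k])) (hc k)

lemma summable_terms (hr : ∀ k, r₀ ≤ r k) (hc : ∀ k, 0 ≤ c k) (hsum : Summable c) (hs : 0 ≤ s) :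
    Summable fun k => exp (-r k * s) * c k :=
  .of_nonneg_of_le (fun k => by positivity [hc k]) (term_le hr hc hs) (hsum.mul_left _)

lemma le_exp_mul_tsum (hr : ∀ k, r₀ ≤ r k) (hc : ∀ k, 0 ≤ c k) (hsum : Summable c)
    (hs : 0 ≤ s) : expSum r c s ≤ exp (-r₀ * s) * ∑' k, c k := by
  rw [← tsum_mul_left]
  exact (summable_terms hr hc hsum hs).tsum_le_tsum (term_le hr hc hs) (hsum.mul_left _)

lemma nonneg (hc : ∀ k, 0 ≤ c k) (s : ℝ) : 0 ≤ expSum r c s :=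
  tsum_nonneg fun k => by positivity [hc k]

lemma apply_zero (r c : ℕ → ℝ) : expSum r c 0 = ∑' k, c k := by
  simp [expSum]

lemma continuousOn (hr : ∀ k, 0 ≤ r k) (hc : ∀ k, 0 ≤ c k) (hsum : Summable c) :
    ContinuousOn (expSum r c) (Ici 0) := by
  refine continuousOn_tsum (fun k => by fun_prop) hsum fun k s (hs : 0 ≤ s) => ?_
  rw [Real.norm_of_nonneg (by positivity [hc k])]
  simpa using term_le hr hc hs k

lemma strictAntiOn (hr : ∀ k, 0 ≤ r k) (hc : ∀ k, 0 ≤ c k) (hsum : Summable c) {i : ℕ}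
    (hri : 0 < r i) (hci : 0 < c i) : StrictAntiOn (expSum r c) (Ici 0) := by
  intro s (hs : 0 ≤ s) t _ hst
  refine Summable.tsum_lt_tsum (i := i) (fun k => ?_) ?_ (summable_terms hr hc hsum (hs.trans hst.le))
    (summable_terms hr hc hsum hs)
  · exact mul_le_mul_of_nonneg_right (exp_le_exp.2 (by nlinarith [hr k])) (hc k)
  · exact mul_lt_mul_of_pos_right (exp_lt_exp.2 (by nlinarith)) hci

lemma tendsto_atTop (hr₀ : 0 < r₀) (hr : ∀ k, r₀ ≤ r k) (hc : ∀ k, 0 ≤ c k)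
    (hsum : Summable c) : Tendsto (expSum r c) atTop (𝓝 0) := by
  have hexp : Tendsto (fun s => exp (-r₀ * s) * ∑' k, c k) atTop (𝓝 0) := by
    simpa using (tendsto_exp_neg_atTop_nhds_zero.comp
      (tendsto_id.const_mul_atTop hr₀)).mul_const (∑' k, c k)
  refine tendsto_of_tendsto_of_tendsto_of_le_of_le' tendsto_const_nhds hexp
    (.of_forall (nonneg hc)) ?_
  filter_upwards [eventually_ge_atTop 0] with s hs using le_exp_mul_tsum hr hc hsum hs

theorem existsUnique_pos_eq (hr₀ : 0 < r₀) (hr : ∀ k, r₀ ≤ r k) (hc : ∀ k, 0 ≤ c k)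
    (hsum : Summable c) {i : ℕ} (hci : 0 < c i) {m : ℝ} (hm : 0 < m) (hmc : m < ∑' k, c k) :
    ∃! s, 0 < s ∧ expSum r c s = m := by
  have hr' : ∀ k, 0 ≤ r k := fun k => hr₀.le.trans (hr k)
  obtain ⟨T, hTm, hT⟩ :=
    (((tendsto_atTop hr₀ hr hc hsum).eventually (gt_mem_nhds hm)).and
      (eventually_ge_atTop 0)).exists
  obtain ⟨s, ⟨hs, -⟩, hsm⟩ := intermediate_value_Icc' hT
    ((continuousOn hr' hc hsum).mono Icc_subset_Ici_self)
    ⟨hTm.le, (apply_zero r c).symm ▸ hmc.le⟩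
  have hs_pos : 0 < s := hs.lt_of_ne <| by rintro rfl; rw [apply_zero] at hsm; linarith
  refine ⟨s, ⟨hs_pos, hsm⟩, fun t ⟨ht, htm⟩ => ?_⟩
  exact (strictAntiOn hr' hc hsum (hr₀.trans_le (hr i)) hci).injOn ht.le hs_pos.le
    (htm.trans hsm.symm)

end expSum

/-- `(λ_{2k+1})²`, the decay rate of the `k`-th odd mode. -/
def oddEigenvalue (k : ℕ) : ℝ := (2 * (k : ℝ) + 1) ^ 2 * π ^ 2

lemma pi_sq_le_oddEigenvalue (k : ℕ) : π ^ 2 ≤ oddEigenvalue k :=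
  le_mul_of_one_le_left (sq_nonneg π) (one_le_pow₀ (by linarith [k.cast_nonneg (α := ℝ)]))

lemma oddEigenvalue_pos (k : ℕ) : 0 < oddEigenvalue k :=
  (pow_pos pi_pos 2).trans_le (pi_sq_le_oddEigenvalue k)

lemma summable_inv_oddEigenvalue : Summable fun k => (oddEigenvalue k)⁻¹ := by
  have hp : Summable fun k : ℕ => ((k : ℝ) + 1) ^ (-2 : ℤ) := by
    simpa using (summable_nat_add_iff 1).2 (Real.summable_nat_pow_inv.2 one_lt_two)
  refine .of_nonneg_of_le (fun k => (inv_pos.2 (oddEigenvalue_pos k)).le) (fun k => ?_) hp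
  have hk : (1 : ℝ) ≤ π ^ 2 := one_le_pow₀ (by linarith [pi_gt_three])
  rw [zpow_neg, zpow_ofNat]
  gcongr
  calc ((k : ℝ) + 1) ^ 2 ≤ (2 * k + 1) ^ 2 * 1 := by nlinarith [k.cast_nonneg (α := ℝ)]
    _ ≤ oddEigenvalue k := by unfold oddEigenvalue; gcongr

def modeMass (t : ℝ) (k : ℕ) : ℝ := 8 * (1 - exp (-oddEigenvalue k * t)) / oddEigenvalue k

lemma modeMass_nonneg {t : ℝ} (ht : 0 ≤ t) (k : ℕ) : 0 ≤ modeMass t k := by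
  have := oddEigenvalue_pos k
  have : exp (-oddEigenvalue k * t) ≤ 1 := exp_le_one_iff.2 (by nlinarith)
  unfold modeMass
  positivity [sub_nonneg.2 this]

lemma modeMass_pos {t : ℝ} (ht : 0 < t) (k : ℕ) : 0 < modeMass t k := by
  have := oddEigenvalue_pos k
  have : exp (-oddEigenvalue k * t) < 1 := exp_lt_one_iff.2 (by nlinarith)
  unfold modeMass
  positivity [sub_pos.2 this]

lemma summable_modeMass {t : ℝ} (ht : 0 ≤ t) : Summable (modeMass t) := by
  refine .of_nonneg_of_le (modeMass_nonneg ht) (fun k => ?_)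
    (summable_inv_oddEigenvalue.mul_left 8)
  rw [modeMass, mul_div_assoc, div_eq_mul_inv]
  gcongr
  exact mul_le_of_le_one_left (inv_pos.2 (oddEigenvalue_pos k)).le
    (sub_le_self _ (exp_pos _).le)

lemma totalMass_eq_tsum_modeMass (t : ℝ) : totalMass t = ∑' k, modeMass t k := by
  rw [totalMass, ← tsum_mul_left]
  simp only [modeMass, mul_div_assoc]
  rfl

lemma decayMass_eq_expSum (t₁ t : ℝ) :
    decayMass t₁ t = expSum oddEigenvalue (modeMass t₁) (t - t₁) := by
  rw [decayMass, expSum, ← tsum_mul_left]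
  refine tsum_congr fun k => ?_
  set l := oddEigenvalue k
  have hsplit : exp (-l * t) = exp (-l * (t - t₁)) * exp (-l * t₁) := by
    rw [← exp_add]; ring_nf
  have hinv : exp (-l * t₁) * exp (l * t₁) = 1 := by rw [← exp_add]; simp
  change 8 * (exp (-l * t) * (exp (l * t₁) - 1) / l) = _
  rw [modeMass, hsplit]
  linear_combination (8 * exp (-l * (t - t₁)) / l) * hinv

end

theorem exists_unique_second_switch_general (m M t₁ : ℝ)
    (hm : 0 < m) (hmM : m < M)
    (ht₁ : 0 < t₁) (hswitch : totalMass t₁ = M) :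
    ∃! t₂ : ℝ, t₁ < t₂ ∧ decayMass t₁ t₂ = m := by
  have hmass : m < ∑' k, modeMass t₁ k := by rwa [← totalMass_eq_tsum_modeMass, hswitch]
  obtain ⟨s, ⟨hs, hsm⟩, huniq⟩ := expSum.existsUnique_pos_eq (pow_pos pi_pos 2)
    pi_sq_le_oddEigenvalue (modeMass_nonneg ht₁.le) (summable_modeMass ht₁.le)
    (modeMass_pos ht₁ 0) hm hmass
  refine ⟨t₁ + s, ⟨by linarith, by rwa [decayMass_eq_expSum, add_sub_cancel_left]⟩, ?_⟩
  rintro t ⟨ht, htm⟩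
  have := huniq (t - t₁) ⟨sub_pos.2 ht, by rwa [← decayMass_eq_expSum]⟩
  linarith

/-- Given `0 < m < M < 1` and the first switching time `t₁ > 0` with `μ(t₁) = M`, there is a
unique second switching time `t₂ > t₁` at which the decaying mass equals `m`. -/
theorem exists_unique_second_switch (m M t₁ : ℝ)
    (hm : 0 < m) (hmM : m < M) (hM : M < 1)
    (ht₁ : 0 < t₁) (hswitch : totalMass t₁ = M) :
    ∃! t₂ : ℝ, t₁ < t₂ ∧ decayMass t₁ t₂ = m :=
  exists_unique_second_switch_general m M t₁ hm hmM ht₁ hswitch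
end

section
/- Let n ≥ 0, let 0 = t₀ < t₁ < ⋯ < t_{2n} be real numbers, and let φ : ℝ → ℝ be the indicator function of the set (⋃_{j=0}^{n−1} [t_{2j}, t_{2j+1}]) ∪ [t_{2n}, ∞). Then for every t > t_{2n}: 8 ∫_0^t φ(τ) · Σ_{k=0}^∞ e^{−(2k+1)²π²(t−τ)} dτ = 8 · Σ_{k=0}^∞ (1/((2k+1)²π²)) · (1 − e^{−(2k+1)²π² t} · Σ_{j=0}^{2n} (−1)^j e^{(2k+1)²π² t_j}). -/
/-!
Off the finitely many switching times, `φ = ∑_{j=0}^{2n} (-1)^j 1_{(t_j, ∞)}`. Against a single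
mode `e^{-c(s-τ)}` the integral over `[0, s]` is therefore `∑_j (-1)^j (1 - e^{-c(s-t_j)}) / c`,
and `∑_{j=0}^{2n} (-1)^j = 1` turns this into `(1 - e^{-cs} ∑_j (-1)^j e^{c t_j}) / c`. These
integrals are `O(1/c_k)` with `∑ 1/c_k < ∞`, which justifies exchanging integral and series.
-/

open MeasureTheory Set

def onSet (t : ℕ → ℝ) (n : ℕ) : Set ℝ :=
  (⋃ j ∈ Finset.range n, Icc (t (2 * j)) (t (2 * j + 1))) ∪ Ici (t (2 * n))

section Indicator

variable {α : Type*} [LinearOrder α]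

theorem indicator_union_Ioc_union_Ioi {U : Set α} {a b d : α} (hU : U ⊆ Iic a) (hab : a ≤ b)
    (hbd : b ≤ d) (τ : α) :
    (U ∪ Ioc a b ∪ Ioi d).indicator (fun _ => (1 : ℝ)) τ =
      (U ∪ Ioi a).indicator (fun _ => 1) τ - (Ioi b).indicator (fun _ => 1) τ +
        (Ioi d).indicator (fun _ => 1) τ := by
  classical
  have := @hU τ
  simp only [indicator_apply, mem_union, mem_Ioc, mem_Ioi, mem_Iic] at this ⊢
  split_ifs <;> grind

theorem indicator_biUnion_Ioc_union_Ioi_eq_sum (n : ℕ) {t : ℕ → α}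
    (ht : MonotoneOn t (Iic (2 * n))) (τ : α) :
    ((⋃ j ∈ Finset.range n, Ioc (t (2 * j)) (t (2 * j + 1))) ∪ Ioi (t (2 * n))).indicator
        (fun _ => (1 : ℝ)) τ =
      ∑ j ∈ Finset.range (2 * n + 1), (-1 : ℝ) ^ j * (Ioi (t j)).indicator (fun _ => 1) τ := by
  induction n with
  | zero => simp
  | succ n ih =>
    have ht' : ∀ i j, i ≤ j → j ≤ 2 * n + 2 → t i ≤ t j := fun i j hij hj =>
      ht (by simp only [mem_Iic]; omega) (by simp only [mem_Iic]; omega) hij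
    have hU : ⋃ j ∈ Finset.range n, Ioc (t (2 * j)) (t (2 * j + 1)) ⊆ Iic (t (2 * n)) :=
      iUnion₂_subset fun j hj => Ioc_subset_Iic_self.trans
        (Iic_subset_Iic.2 (ht' _ _ (by simp at hj; omega) (by omega)))
    rw [Finset.range_add_one, Finset.set_biUnion_insert, union_comm (Ioc _ _),
      show 2 * (n + 1) = 2 * n + 1 + 1 by ring, Finset.sum_range_succ, Finset.sum_range_succ,
      ← ih (ht.mono (Iic_subset_Iic.2 (by omega))),
      indicator_union_Ioc_union_Ioi hU (ht' _ _ (by omega) (by omega))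
        (ht' _ _ (by omega) (by omega)),
      Odd.neg_one_pow ⟨n, rfl⟩, Even.neg_one_pow ⟨n + 1, by ring⟩]
    ring

end Indicator

theorem onSet_ae_eq (t : ℕ → ℝ) (n : ℕ) :
    onSet t n =ᵐ[volume]
      ((⋃ j ∈ Finset.range n, Ioc (t (2 * j)) (t (2 * j + 1))) ∪ Ioi (t (2 * n)) : Set ℝ) :=
  ((Finset.finite_toSet _).eventuallyEq_iUnion fun _ _ => Ioc_ae_eq_Icc.symm).union
    Ioi_ae_eq_Ici.symm

theorem intervalIntegral_indicator_Ioi {E : Type*} [NormedAddCommGroup E] [NormedSpace ℝ E]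
    {a b s : ℝ} (g : ℝ → E) (hba : b ≤ a) (has : a ≤ s) :
    ∫ τ in b..s, (Ioi a).indicator g τ = ∫ τ in a..s, g τ := by
  rw [intervalIntegral.integral_of_le (hba.trans has), intervalIntegral.integral_of_le has,
    integral_indicator measurableSet_Ioi, Measure.restrict_restrict measurableSet_Ioi,
    inter_comm, Ioc_inter_Ioi, sup_eq_right.2 hba]

theorem integral_indicator_onSet_mul (n : ℕ) {t : ℕ → ℝ} (ht : MonotoneOn t (Iic (2 * n)))
    {b s : ℝ} (hb : b ≤ t 0) (hs : t (2 * n) ≤ s) {g : ℝ → ℝ}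
    (hg : IntervalIntegrable g volume b s) :
    ∫ τ in b..s, (onSet t n).indicator (fun _ => 1) τ * g τ =
      ∑ j ∈ Finset.range (2 * n + 1), (-1) ^ j * ∫ τ in t j..s, g τ := by
  have hbounds : ∀ j ∈ Finset.range (2 * n + 1), b ≤ t j ∧ t j ≤ s := fun j hj => by
    have hj : j ≤ 2 * n := Finset.mem_range_succ_iff.1 hj
    exact ⟨hb.trans (ht (by simp) (by simpa using hj) (Nat.zero_le j)),
      (ht (by simpa using hj) (by simp) hj).trans hs⟩
  calc _ = ∫ τ in b..s, ∑ j ∈ Finset.range (2 * n + 1), (-1) ^ j * (Ioi (t j)).indicator g τ := by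
        refine intervalIntegral.integral_congr_ae ?_
        filter_upwards [indicator_ae_eq_of_ae_eq_set (f := fun _ => (1 : ℝ)) (onSet_ae_eq t n)]
          with τ hτ _
        rw [hτ, indicator_biUnion_Ioc_union_Ioi_eq_sum n ht, Finset.sum_mul]
        simp only [mul_assoc, ← indicator_mul_left, one_mul]
    _ = _ := by
        rw [intervalIntegral.integral_finsetSum fun j _ => (intervalIntegrable_iff.2
          ((intervalIntegrable_iff.1 hg).indicator measurableSet_Ioi)).const_mul _]
        refine Finset.sum_congr rfl fun j hj => ?_
        rw [intervalIntegral.integral_const_mul,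
          intervalIntegral_indicator_Ioi g (hbounds j hj).1 (hbounds j hj).2]

theorem integral_exp_neg_mul_sub {c : ℝ} (hc : c ≠ 0) (a s : ℝ) :
    ∫ τ in a..s, Real.exp (-c * (s - τ)) = (1 - Real.exp (-c * (s - a))) / c := by
  have hderiv : ∀ τ,
      HasDerivAt (fun τ => Real.exp (-c * (s - τ)) / c) (Real.exp (-c * (s - τ))) τ := fun τ =>
    ((((hasDerivAt_id' τ).const_sub s).const_mul (-c)).exp.div_const c).congr_deriv
      (by field_simp)
  rw [intervalIntegral.integral_eq_sub_of_hasDerivAt (fun τ _ => hderiv τ)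
    ((by fun_prop : Continuous fun τ => Real.exp (-c * (s - τ))).intervalIntegrable _ _)]
  simp only [sub_self, mul_zero, Real.exp_zero]
  ring

theorem integral_indicator_onSet_mul_exp (n : ℕ) {t : ℕ → ℝ}
    (ht : MonotoneOn t (Iic (2 * n))) {b s : ℝ} (hb : b ≤ t 0) (hs : t (2 * n) ≤ s) {c : ℝ}
    (hc : c ≠ 0) :
    ∫ τ in b..s, (onSet t n).indicator (fun _ => 1) τ * Real.exp (-c * (s - τ)) =
      1 / c * (1 - Real.exp (-c * s) *
        ∑ j ∈ Finset.range (2 * n + 1), (-1) ^ j * Real.exp (c * t j)) := by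
  rw [integral_indicator_onSet_mul n ht hb hs
    ((by fun_prop : Continuous fun τ => Real.exp (-c * (s - τ))).intervalIntegrable _ _)]
  have halt : ∑ j ∈ Finset.range (2 * n + 1), (-1 : ℝ) ^ j = 1 := by
    simp [neg_one_geom_sum]
  calc _ = ∑ j ∈ Finset.range (2 * n + 1),
        ((-1) ^ j / c - Real.exp (-c * s) / c * ((-1) ^ j * Real.exp (c * t j))) := by
        refine Finset.sum_congr rfl fun j _ => ?_
        rw [integral_exp_neg_mul_sub hc, show -c * (s - t j) = -c * s + c * t j by ring,
          Real.exp_add]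
        ring
    _ = _ := by
        rw [Finset.sum_sub_distrib, ← Finset.sum_div, halt, ← Finset.mul_sum]
        ring

theorem intervalIntegral_mul_tsum_exp {φ : ℝ → ℝ} (hφ : AEStronglyMeasurable φ volume) {C : ℝ}
    (hφC : ∀ τ, ‖φ τ‖ ≤ C) {c : ℕ → ℝ} (hc : ∀ k, 0 < c k) (hsum : Summable fun k => 1 / c k)
    {b s : ℝ} (hbs : b ≤ s) :
    ∫ τ in b..s, φ τ * ∑' k, Real.exp (-c k * (s - τ)) =
      ∑' k, ∫ τ in b..s, φ τ * Real.exp (-c k * (s - τ)) := by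
  have hexp : ∀ k, IntegrableOn (fun τ => Real.exp (-c k * (s - τ))) (Ioc b s) :=
    fun k => (by fun_prop : Continuous fun τ => Real.exp (-c k * (s - τ))).integrableOn_Ioc
  have hint : ∀ k, IntegrableOn (fun τ => φ τ * Real.exp (-c k * (s - τ))) (Ioc b s) :=
    fun k => (hexp k).bdd_mul hφ.restrict (ae_of_all _ hφC)
  have hbound : ∀ k, ∫ τ in Ioc b s, ‖φ τ * Real.exp (-c k * (s - τ))‖ ≤ C * (1 / c k) := by
    intro k
    calc ∫ τ in Ioc b s, ‖φ τ * Real.exp (-c k * (s - τ))‖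
        ≤ ∫ τ in Ioc b s, C * Real.exp (-c k * (s - τ)) := by
          refine integral_mono_of_nonneg (ae_of_all _ fun τ => norm_nonneg _)
            ((hexp k).const_mul C) (ae_of_all _ fun τ => ?_)
          dsimp only
          rw [norm_mul, Real.norm_of_nonneg (Real.exp_pos _).le]
          exact mul_le_mul_of_nonneg_right (hφC τ) (Real.exp_pos _).le
      _ = C * ((1 - Real.exp (-c k * (s - b))) / c k) := by
          rw [integral_const_mul, ← intervalIntegral.integral_of_le hbs,
            integral_exp_neg_mul_sub (hc k).ne']
      _ ≤ C * (1 / c k) := by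
          have hC : 0 ≤ C := (norm_nonneg _).trans (hφC 0)
          have := hc k
          gcongr
          linarith [Real.exp_pos (-c k * (s - b))]
  simp only [intervalIntegral.integral_of_le hbs, ← tsum_mul_left]
  exact (integral_tsum_of_summable_integral_norm hint
    (.of_nonneg_of_le (fun k => integral_nonneg fun τ => norm_nonneg _) hbound
      (hsum.mul_left C))).symm

theorem summable_one_div_odd_sq_mul_pi_sq :
    Summable fun k : ℕ => 1 / ((2 * (k : ℝ) + 1) ^ 2 * Real.pi ^ 2) := by
  have hodd : Summable fun k : ℕ => 1 / ((2 * k + 1 : ℕ) : ℝ) ^ 2 :=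
    (Real.summable_one_div_nat_pow.2 one_lt_two).comp_injective
      (fun i j h => by simpa using h : Function.Injective fun k : ℕ => 2 * k + 1)
  exact (hodd.div_const (Real.pi ^ 2)).congr fun k => by push_cast; rw [div_div]

/-- With `φ` the indicator of `(⋃_{j=0}^{n-1} [t_{2j}, t_{2j+1}]) ∪ [t_{2n}, ∞)`, the integral
representation `8 ∫_0^t φ(τ) ∑_k e^{-(2k+1)²π²(t-τ)} dτ` of the total mass equals the series
`8 ∑_k (1/((2k+1)²π²)) (1 - e^{-(2k+1)²π² t} ∑_{j=0}^{2n} (-1)^j e^{(2k+1)²π² t_j})`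
for all `t > t_{2n}`. -/
theorem mass_integral_eq_series_on (n : ℕ) (t : ℕ → ℝ) (ht0 : t 0 = 0)
    (hmono : ∀ i, i < 2 * n → t i < t (i + 1))
    (φ : ℝ → ℝ)
    (hφ : φ = Set.indicator
      ((⋃ j ∈ Finset.range n, Set.Icc (t (2 * j)) (t (2 * j + 1))) ∪
        Set.Ici (t (2 * n))) (fun _ => (1 : ℝ))) :
    ∀ s : ℝ, t (2 * n) < s →
      8 * ∫ τ in (0 : ℝ)..s, φ τ *
          ∑' k : ℕ, Real.exp (-((2 * (k : ℝ) + 1) ^ 2 * Real.pi ^ 2) * (s - τ)) =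
      8 * ∑' k : ℕ, (1 / ((2 * (k : ℝ) + 1) ^ 2 * Real.pi ^ 2)) *
        (1 - Real.exp (-((2 * (k : ℝ) + 1) ^ 2 * Real.pi ^ 2) * s) *
          ∑ j ∈ Finset.range (2 * n + 1), (-1 : ℝ) ^ j *
            Real.exp (((2 * (k : ℝ) + 1) ^ 2 * Real.pi ^ 2) * t j)) := by
  intro s hs
  have ht : MonotoneOn t (Iic (2 * n)) :=
    monotoneOn_of_le_succ ordConnected_Iic fun i _ _ hi => by
      rw [Order.succ_eq_add_one, mem_Iic] at hi
      exact (hmono i (by omega)).le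
  have hs0 : 0 ≤ s := ht0 ▸ (ht (by simp) (by simp) (Nat.zero_le _)).trans hs.le
  have hφm : AEStronglyMeasurable φ volume :=
    hφ ▸ (measurable_const.indicator ((Finset.measurableSet_biUnion _ fun _ _ =>
      measurableSet_Icc).union measurableSet_Ici)).aestronglyMeasurable
  have hφC : ∀ τ, ‖φ τ‖ ≤ 1 := fun τ =>
    hφ ▸ (norm_indicator_le_norm_self _ τ).trans_eq norm_one
  rw [intervalIntegral_mul_tsum_exp hφm hφC (c := fun k : ℕ => (2 * (k : ℝ) + 1) ^ 2 * Real.pi ^ 2)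
    (fun k => by positivity) summable_one_div_odd_sq_mul_pi_sq hs0]
  congr 1
  refine tsum_congr fun k => ?_
  rw [hφ]
  exact integral_indicator_onSet_mul_exp n ht ht0.ge hs.le (by positivity)
end

section
/- Let 0 < α < 1/2 and define t₀ = 0 and t_n = (1/π²) · ln((1−α)^{n−1}/α^n) for n ≥ 1. Then for every n ≥ 0: e^{−π² t_{2n+1}} · Σ_{j=0}^{2n} (−1)^j e^{π² t_j} = α. -/
/-- For the first-term approximation with symmetric bounds, the switching times
`t_n = (1/π²) ln((1-α)^{n-1}/α^n)` satisfy
`e^{-π² t_{2n+1}} ∑_{j=0}^{2n} (-1)^j e^{π² t_j} = α` for all `n ≥ 0`,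
i.e. the approximate mass equals `M = (8/π²)(1-α)` at the odd switching times. -/
theorem firstTerm_odd_switch (α : ℝ) (hα0 : 0 < α) (hα : α < 1 / 2)
    (t : ℕ → ℝ) (ht0 : t 0 = 0)
    (ht : ∀ n : ℕ, 1 ≤ n →
      t n = (1 / Real.pi ^ 2) * Real.log ((1 - α) ^ (n - 1) / α ^ n)) :
    ∀ n : ℕ,
      Real.exp (-Real.pi ^ 2 * t (2 * n + 1)) *
        ∑ j ∈ Finset.range (2 * n + 1), (-1 : ℝ) ^ j * Real.exp (Real.pi ^ 2 * t j) = α := by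
  have h1α : 0 < 1 - α := by linarith
  have hpi : (Real.pi : ℝ) ^ 2 ≠ 0 := by positivity
  have hαne : α ≠ 0 := ne_of_gt hα0
  have h1αne : (1 : ℝ) - α ≠ 0 := ne_of_gt h1α
  have hA : ∀ j : ℕ, 1 ≤ j →
      Real.exp (Real.pi ^ 2 * t j) = (1 - α) ^ (j - 1) / α ^ j := by
    intro j hj
    have hy : 0 < (1 - α) ^ (j - 1) / α ^ j := by positivity
    rw [ht j hj]
    rw [show Real.pi ^ 2 * (1 / Real.pi ^ 2 * Real.log ((1 - α) ^ (j - 1) / α ^ j))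
        = Real.log ((1 - α) ^ (j - 1) / α ^ j) by field_simp]
    exact Real.exp_log hy
  have hS : ∀ n : ℕ,
      ∑ j ∈ Finset.range (2 * n + 1), (-1 : ℝ) ^ j * Real.exp (Real.pi ^ 2 * t j)
        = (1 - α) ^ (2 * n) / α ^ (2 * n) := by
    intro n
    induction n with
    | zero =>
      simp [ht0]
    | succ n ih =>
      have e1 : 2 * (n + 1) + 1 = (2 * n + 1) + 1 + 1 := by ring
      rw [e1, Finset.sum_range_succ, Finset.sum_range_succ, ih,
        hA (2 * n + 1) (by omega), hA (2 * n + 1 + 1) (by omega)]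
      have h2 : (2 * n + 1) - 1 = 2 * n := by omega
      have h3 : (2 * n + 1 + 1) - 1 = 2 * n + 1 := by omega
      rw [h2, h3]
      have hpow : (-1 : ℝ) ^ (2 * n + 1) = -1 := by
        rw [pow_succ, pow_mul]; norm_num
      have hpow2 : (-1 : ℝ) ^ (2 * n + 1 + 1) = 1 := by
        rw [pow_succ, hpow]; norm_num
      rw [hpow, hpow2]
      have e2 : 2 * (n + 1) = 2 * n + 2 := by ring
      rw [e2]
      field_simp
      ring
  intro n
  rw [hS n]
  have hEodd : Real.exp (-Real.pi ^ 2 * t (2 * n + 1))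
      = α ^ (2 * n + 1) / (1 - α) ^ (2 * n) := by
    have := hA (2 * n + 1) (by omega)
    have h2 : (2 * n + 1) - 1 = 2 * n := by omega
    rw [h2] at this
    rw [show -Real.pi ^ 2 * t (2 * n + 1) = -(Real.pi ^ 2 * t (2 * n + 1)) by ring,
      Real.exp_neg, this]
    field_simp
  rw [hEodd]
  field_simp
  ring
end

section
/- Let 0 < α < 1/2, define t₀ = 0 and t_n = (1/π²) · ln((1−α)^{n−1}/α^n) for n ≥ 1, and let φ : ℝ → ℝ be the indicator function of ⋃_{j=0}^∞ [t_{2j}, t_{2j+1}]. Define μ̃(t) = 8 ∫_0^t φ(τ) e^{−π²(t−τ)} dτ. Then μ̃(t_{2n+1}) = (8/π²)(1−α) for all n ≥ 0 and μ̃(t_{2n}) = (8/π²)α for all n ≥ 1. -/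
/-!
With `c = π²`, the mass `μ̃ = 8 ∫₀ᵗ φ(τ) e^{-c(t-τ)} dτ` solves `μ̃' = 8φ - cμ̃`: across an interval
of length `d` on which `φ ≡ v` it evolves as `μ̃ ↦ e^{-cd} μ̃ + (8v/c)(1 - e^{-cd})`. The switching
times are chosen so that `e^{-c t₁} = α` and every later gap has `e^{-cd} = α/(1-α)`. With these
factors the first "on" phase takes `0` to `M`, every "off" phase takes `M` to `m`, and every later
"on" phase takes `m` back to `M`.
-/

open Real Set MeasureTheory intervalIntegral

noncomputable def expConvolution (c : ℝ) (φ : ℝ → ℝ) (s : ℝ) : ℝ :=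
  ∫ τ in (0 : ℝ)..s, φ τ * exp (-c * (s - τ))

section ExpConvolution

variable {c : ℝ} {φ : ℝ → ℝ}

lemma expConvolution_zero : expConvolution c φ 0 = 0 := integral_same

lemma expConvolution_eq_exp_mul_add (hφ : LocallyIntegrable φ) (a b : ℝ) :
    expConvolution c φ b =
      exp (-c * (b - a)) * expConvolution c φ a + ∫ τ in a..b, φ τ * exp (-c * (b - τ)) := by
  have hint : ∀ x y : ℝ, IntervalIntegrable (fun τ => φ τ * exp (-c * (b - τ))) volume x y :=
    fun x y => ((hφ.mul_continuous (by fun_prop)).integrableOn_isCompact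
      isCompact_uIcc).intervalIntegrable
  have hrestart : ∫ τ in (0 : ℝ)..a, φ τ * exp (-c * (b - τ)) =
      exp (-c * (b - a)) * expConvolution c φ a := by
    rw [expConvolution, ← intervalIntegral.integral_const_mul]
    refine integral_congr fun τ _ => ?_
    rw [show -c * (b - τ) = -c * (b - a) + -c * (a - τ) by ring, exp_add]
    ring
  rw [expConvolution, ← integral_add_adjacent_intervals (hint 0 a) (hint a b), hrestart]

lemma integral_mul_exp_of_eqOn_Ioo (hc : c ≠ 0) {a b v : ℝ} (hab : a ≤ b)
    (hv : EqOn φ (fun _ => v) (Ioo a b)) :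
    ∫ τ in a..b, φ τ * exp (-c * (b - τ)) = v * (1 - exp (-c * (b - a))) / c := by
  have hconst : ∫ τ in a..b, φ τ * exp (-c * (b - τ)) = ∫ τ in a..b, v * exp (-c * (b - τ)) := by
    rw [integral_of_le hab, integral_of_le hab, integral_Ioc_eq_integral_Ioo,
      integral_Ioc_eq_integral_Ioo]
    exact setIntegral_congr_fun measurableSet_Ioo fun τ hτ => by rw [hv hτ]
  have hexp : ∫ τ in a..b, exp (-c * (b - τ)) = (1 - exp (-c * (b - a))) / c := by
    simp only [show ∀ τ, -c * (b - τ) = c * τ + -c * b from fun τ => by ring]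
    rw [integral_comp_mul_add (fun x => exp x) hc, integral_exp, smul_eq_mul,
      show c * b + -c * b = 0 by ring, show c * a + -c * b = -c * (b - a) by ring, exp_zero]
    field_simp
  rw [hconst, intervalIntegral.integral_const_mul, hexp, mul_div_assoc]

lemma expConvolution_of_eqOn_Ioo (hc : c ≠ 0) (hφ : LocallyIntegrable φ) {a b v : ℝ}
    (hab : a ≤ b) (hv : EqOn φ (fun _ => v) (Ioo a b)) :
    expConvolution c φ b =
      exp (-c * (b - a)) * expConvolution c φ a + v * (1 - exp (-c * (b - a))) / c := by
  rw [expConvolution_eq_exp_mul_add hφ a b, integral_mul_exp_of_eqOn_Ioo hc hab hv]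

end ExpConvolution

noncomputable def switchTime (α : ℝ) : ℕ → ℝ
  | 0 => 0
  | n + 1 => 1 / π ^ 2 * log ((1 - α) ^ n / α ^ (n + 1))

section SwitchTime

variable {α : ℝ}

lemma exp_pi_sq_mul_switchTime_succ (hα0 : 0 < α) (hα1 : α < 1) (n : ℕ) :
    exp (π ^ 2 * switchTime α (n + 1)) = (1 - α) ^ n / α ^ (n + 1) := by
  have h1α : 0 < 1 - α := by linarith
  rw [switchTime, ← mul_assoc, mul_one_div_cancel (by positivity), one_mul,
    exp_log (by positivity)]

lemma exp_neg_pi_sq_mul_switchTime_one (hα0 : 0 < α) (hα1 : α < 1) :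
    exp (-π ^ 2 * (switchTime α 1 - switchTime α 0)) = α := by
  rw [switchTime, sub_zero, neg_mul, exp_neg, exp_pi_sq_mul_switchTime_succ hα0 hα1]
  simp

lemma exp_neg_pi_sq_mul_switchTime_gap (hα0 : 0 < α) (hα1 : α < 1) (n : ℕ) :
    exp (-π ^ 2 * (switchTime α (n + 2) - switchTime α (n + 1))) = α / (1 - α) := by
  have h1α : 0 < 1 - α := by linarith
  rw [show -π ^ 2 * (switchTime α (n + 2) - switchTime α (n + 1)) =
      π ^ 2 * switchTime α (n + 1) - π ^ 2 * switchTime α (n + 2) by ring, exp_sub,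
    exp_pi_sq_mul_switchTime_succ hα0 hα1, exp_pi_sq_mul_switchTime_succ hα0 hα1]
  field_simp
  ring

lemma switchTime_strictMono (hα0 : 0 < α) (hα : α < 1 / 2) : StrictMono (switchTime α) := by
  have hα1 : α < 1 := by linarith
  refine strictMono_nat_of_lt_succ fun n => ?_
  suffices exp (-π ^ 2 * (switchTime α (n + 1) - switchTime α n)) < 1 by
    rw [exp_lt_one_iff] at this
    nlinarith [pi_pos]
  cases n with
  | zero => rw [exp_neg_pi_sq_mul_switchTime_one hα0 hα1]; exact hα1
  | succ n =>
    rw [exp_neg_pi_sq_mul_switchTime_gap hα0 hα1, div_lt_one (by linarith)]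
    linarith

end SwitchTime

lemma indicator_iUnion_Icc_eqOn_Ioo {t : ℕ → ℝ} (ht : Monotone t) (j : ℕ) :
    EqOn ((⋃ i, Icc (t (2 * i)) (t (2 * i + 1))).indicator fun _ => (1 : ℝ)) (fun _ => 0)
      (Ioo (t (2 * j + 1)) (t (2 * j + 2))) := by
  refine fun x hx => indicator_of_notMem (fun hmem => ?_) _
  obtain ⟨i, hi⟩ := mem_iUnion.mp hmem
  rcases le_or_gt i j with hij | hij
  · linarith [hx.1, hi.2, ht (show 2 * i + 1 ≤ 2 * j + 1 by omega)]
  · linarith [hx.2, hi.1, ht (show 2 * j + 2 ≤ 2 * i by omega)]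

noncomputable def switchBoundary (α : ℝ) : ℝ → ℝ :=
  (⋃ j, Icc (switchTime α (2 * j)) (switchTime α (2 * j + 1))).indicator fun _ => 1

section SwitchBoundary

variable {α : ℝ}

lemma locallyIntegrable_switchBoundary : LocallyIntegrable (switchBoundary α) :=
  (locallyIntegrable_const 1).indicator (MeasurableSet.iUnion fun _ => measurableSet_Icc)

lemma expConvolution_switchBoundary_on (hα0 : 0 < α) (hα : α < 1 / 2) (j : ℕ) :
    expConvolution (π ^ 2) (switchBoundary α) (switchTime α (2 * j + 1)) =
      exp (-π ^ 2 * (switchTime α (2 * j + 1) - switchTime α (2 * j))) *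
          expConvolution (π ^ 2) (switchBoundary α) (switchTime α (2 * j)) +
        (1 - exp (-π ^ 2 * (switchTime α (2 * j + 1) - switchTime α (2 * j)))) / π ^ 2 := by
  have hon : EqOn (switchBoundary α) (fun _ => 1)
      (Ioo (switchTime α (2 * j)) (switchTime α (2 * j + 1))) :=
    fun _ hx => indicator_of_mem (mem_iUnion.mpr ⟨j, by exact Ioo_subset_Icc_self hx⟩) _
  rw [expConvolution_of_eqOn_Ioo (by positivity) locallyIntegrable_switchBoundary
    ((switchTime_strictMono hα0 hα).monotone (by omega)) hon, one_mul]

lemma expConvolution_switchBoundary_off (hα0 : 0 < α) (hα : α < 1 / 2) (j : ℕ) :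
    expConvolution (π ^ 2) (switchBoundary α) (switchTime α (2 * j + 2)) =
      exp (-π ^ 2 * (switchTime α (2 * j + 2) - switchTime α (2 * j + 1))) *
        expConvolution (π ^ 2) (switchBoundary α) (switchTime α (2 * j + 1)) := by
  have hmono := (switchTime_strictMono hα0 hα).monotone
  rw [expConvolution_of_eqOn_Ioo (by positivity) locallyIntegrable_switchBoundary
    (hmono (by omega)) (indicator_iUnion_Icc_eqOn_Ioo hmono j), zero_mul, zero_div, add_zero]

lemma expConvolution_switchBoundary_even_of_odd (hα0 : 0 < α) (hα : α < 1 / 2) {n : ℕ}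
    (hodd : expConvolution (π ^ 2) (switchBoundary α) (switchTime α (2 * n + 1)) =
      (1 - α) / π ^ 2) :
    expConvolution (π ^ 2) (switchBoundary α) (switchTime α (2 * n + 2)) = α / π ^ 2 := by
  have h1α : 1 - α ≠ 0 := by linarith
  rw [expConvolution_switchBoundary_off hα0 hα, hodd,
    exp_neg_pi_sq_mul_switchTime_gap hα0 (by linarith)]
  field_simp

lemma expConvolution_switchBoundary_odd (hα0 : 0 < α) (hα : α < 1 / 2) (n : ℕ) :
    expConvolution (π ^ 2) (switchBoundary α) (switchTime α (2 * n + 1)) = (1 - α) / π ^ 2 := by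
  have hα1 : α < 1 := by linarith
  induction n with
  | zero =>
    rw [expConvolution_switchBoundary_on hα0 hα, exp_neg_pi_sq_mul_switchTime_one hα0 hα1]
    simp [switchTime, expConvolution_zero]
  | succ n ih =>
    have hon := expConvolution_switchBoundary_on hα0 hα (n + 1)
    rw [show 2 * (n + 1) = 2 * n + 2 by ring] at hon ⊢
    rw [hon, exp_neg_pi_sq_mul_switchTime_gap hα0 hα1,
      expConvolution_switchBoundary_even_of_odd hα0 hα ih]
    have h1α : 1 - α ≠ 0 := by linarith
    field_simp
    ring

end SwitchBoundary

/-- With switching times `t₀ = 0`, `t_n = (1/π²) ln((1-α)^{n-1}/α^n)` and boundary value `φ`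
the indicator of `⋃_j [t_{2j}, t_{2j+1}]`, the first-term approximate mass
`μ̃(t) = 8 ∫_0^t φ(τ) e^{-π²(t-τ)} dτ` equals `M = (8/π²)(1-α)` at the odd switching times
and `m = (8/π²)α` at the even ones. -/
theorem firstTerm_mass_at_switches (α : ℝ) (hα0 : 0 < α) (hα : α < 1 / 2)
    (t : ℕ → ℝ) (ht0 : t 0 = 0)
    (ht : ∀ n : ℕ, 1 ≤ n →
      t n = (1 / Real.pi ^ 2) * Real.log ((1 - α) ^ (n - 1) / α ^ n))
    (φ : ℝ → ℝ)
    (hφ : φ = Set.indicator (⋃ j : ℕ, Set.Icc (t (2 * j)) (t (2 * j + 1)))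
      (fun _ => (1 : ℝ)))
    (μ : ℝ → ℝ)
    (hμ : μ = fun s => 8 * ∫ τ in (0 : ℝ)..s, φ τ * Real.exp (-Real.pi ^ 2 * (s - τ))) :
    (∀ n : ℕ, μ (t (2 * n + 1)) = (8 / Real.pi ^ 2) * (1 - α)) ∧
    (∀ n : ℕ, 1 ≤ n → μ (t (2 * n)) = (8 / Real.pi ^ 2) * α) := by
  obtain rfl : t = switchTime α := funext fun
    | 0 => ht0
    | n + 1 => ht (n + 1) (by omega)
  obtain rfl : φ = switchBoundary α := hφ
  obtain rfl : μ = fun s => 8 * expConvolution (π ^ 2) (switchBoundary α) s := hμ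
  refine ⟨fun n => ?_, fun n hn => ?_⟩
  · dsimp only
    rw [expConvolution_switchBoundary_odd hα0 hα n]
    ring
  · obtain ⟨m, rfl⟩ : ∃ m, n = m + 1 := ⟨n - 1, by omega⟩
    dsimp only
    rw [show 2 * (m + 1) = 2 * m + 2 by ring, expConvolution_switchBoundary_even_of_odd hα0 hα
      (expConvolution_switchBoundary_odd hα0 hα m)]
    ring
end

section
/- Let α, β > 0 with α + β < 1. Define s₀ = 0, s_{2n} = (1/π²) · ln((1−α)^n (1−β)^{n−1} / (α^n β^n)) for n ≥ 1, and s_{2n+1} = (1/π²) · ln((1−α)^n (1−β)^n / (α^{n+1} β^n)) for n ≥ 0. Then for every n ≥ 1: e^{−π² s_{2n}} · Σ_{j=0}^{2n−1} (−1)^{j+1} e^{π² s_j} = β. -/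
lemma exp_pi_sq_aux (R x : ℝ) (hR : 0 < R)
    (hx : x = (1 / Real.pi ^ 2) * Real.log R) :
    Real.exp (Real.pi ^ 2 * x) = R := by
  rw [hx, show Real.pi ^ 2 * (1 / Real.pi ^ 2 * Real.log R) = Real.log R by
    field_simp]
  exact Real.exp_log hR

/-- For the non-symmetric one-mode approximation, the switching times
`s_{2n} = (1/π²) ln((1-α)^n (1-β)^{n-1} / (α^n β^n))` and
`s_{2n+1} = (1/π²) ln((1-α)^n (1-β)^n / (α^{n+1} β^n))` satisfy
`e^{-π² s_{2n}} ∑_{j=0}^{2n-1} (-1)^{j+1} e^{π² s_j} = β` for all `n ≥ 1`,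
i.e. the approximate mass equals `m = (8/π²)β` at the even switching times. -/
theorem higherOrder_even_switch (α β : ℝ) (hα : 0 < α) (hβ : 0 < β)
    (hαβ : α + β < 1)
    (s : ℕ → ℝ) (hs0 : s 0 = 0)
    (hsEven : ∀ n : ℕ, 1 ≤ n →
      s (2 * n) = (1 / Real.pi ^ 2) *
        Real.log ((1 - α) ^ n * (1 - β) ^ (n - 1) / (α ^ n * β ^ n)))
    (hsOdd : ∀ n : ℕ,
      s (2 * n + 1) = (1 / Real.pi ^ 2) *
        Real.log ((1 - α) ^ n * (1 - β) ^ n / (α ^ (n + 1) * β ^ n))) :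
    ∀ n : ℕ, 1 ≤ n →
      Real.exp (-Real.pi ^ 2 * s (2 * n)) *
        ∑ j ∈ Finset.range (2 * n), (-1 : ℝ) ^ (j + 1) * Real.exp (Real.pi ^ 2 * s j) = β := by
  have hα1 : α < 1 := by linarith
  have hβ1 : β < 1 := by linarith
  have h1α : (0:ℝ) < 1 - α := by linarith
  have h1β : (0:ℝ) < 1 - β := by linarith
  have hαne : α ≠ 0 := ne_of_gt hα
  have hβne : β ≠ 0 := ne_of_gt hβ
  have h1αne : (1 - α) ≠ 0 := ne_of_gt h1α
  have h1βne : (1 - β) ≠ 0 := ne_of_gt h1β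
  -- exp at even indices
  have hE : ∀ m : ℕ, Real.exp (Real.pi ^ 2 * s (2 * (m + 1))) =
      (1 - α) ^ (m + 1) * (1 - β) ^ m / (α ^ (m + 1) * β ^ (m + 1)) := by
    intro m
    apply exp_pi_sq_aux
    · positivity
    · have := hsEven (m + 1) (Nat.le_add_left 1 m)
      simpa using this
  -- exp at odd indices
  have hO : ∀ m : ℕ, Real.exp (Real.pi ^ 2 * s (2 * m + 1)) =
      (1 - α) ^ m * (1 - β) ^ m / (α ^ (m + 1) * β ^ m) := by
    intro m
    apply exp_pi_sq_aux
    · positivity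
    · exact hsOdd m
  have key : ∀ m : ℕ, ∑ j ∈ Finset.range (2 * (m + 1)),
      (-1 : ℝ) ^ (j + 1) * Real.exp (Real.pi ^ 2 * s j) =
      β * ((1 - α) ^ (m + 1) * (1 - β) ^ m / (α ^ (m + 1) * β ^ (m + 1))) := by
    intro m
    induction m with
    | zero =>
      have e0 : Real.exp (Real.pi ^ 2 * s 0) = 1 := by rw [hs0]; simp
      have e1 : Real.exp (Real.pi ^ 2 * s 1) = 1 / α := by
        have := hO 0
        simpa using this
      norm_num [Finset.sum_range_succ, e0, e1]
      field_simp
      ring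
    | succ k ih =>
      have h2 : 2 * (k + 1 + 1) = 2 * (k + 1) + 1 + 1 := by ring
      rw [h2, Finset.sum_range_succ, Finset.sum_range_succ, ih, hE k,
        hO (k + 1)]
      have hsgn1 : (-1 : ℝ) ^ (2 * (k + 1) + 1) = -1 := by
        simp [pow_succ, pow_mul]
      have hsgn2 : (-1 : ℝ) ^ (2 * (k + 1) + 1 + 1) = 1 := by
        simp [pow_succ, pow_mul]
      rw [hsgn1, hsgn2]
      field_simp
      ring
  intro n hn
  obtain ⟨m, rfl⟩ := Nat.exists_eq_add_of_le hn
  have hsum := key m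
  have hEm := hE m
  rw [show 1 + m = m + 1 by ring] at *
  rw [hsum, neg_mul, Real.exp_neg, hEm]
  rw [show β * ((1 - α) ^ (m + 1) * (1 - β) ^ m / (α ^ (m + 1) * β ^ (m + 1))) =
      ((1 - α) ^ (m + 1) * (1 - β) ^ m / (α ^ (m + 1) * β ^ (m + 1))) * β by ring,
    ← mul_assoc, inv_mul_cancel₀ (by positivity), one_mul]
end

section
/- Let α, β > 0 with α + β < 1. Define s₀ = 0, s_{2n} = (1/π²) · ln((1−α)^n (1−β)^{n−1} / (α^n β^n)) for n ≥ 1, and s_{2n+1} = (1/π²) · ln((1−α)^n (1−β)^n / (α^{n+1} β^n)) for n ≥ 0. Then for every n ≥ 0: e^{−π² s_{2n+1}} · Σ_{j=0}^{2n} (−1)^j e^{π² s_j} = α. -/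
/-- For the non-symmetric one-mode approximation, the switching times
`s_{2n} = (1/π²) ln((1-α)^n (1-β)^{n-1} / (α^n β^n))` and
`s_{2n+1} = (1/π²) ln((1-α)^n (1-β)^n / (α^{n+1} β^n))` satisfy
`e^{-π² s_{2n+1}} ∑_{j=0}^{2n} (-1)^j e^{π² s_j} = α` for all `n ≥ 0`,
i.e. the approximate mass equals `M = 1 - (8/π²)α` at the odd switching times. -/
theorem higherOrder_odd_switch (α β : ℝ) (hα : 0 < α) (hβ : 0 < β)
    (hαβ : α + β < 1)
    (s : ℕ → ℝ) (hs0 : s 0 = 0)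
    (hsEven : ∀ n : ℕ, 1 ≤ n →
      s (2 * n) = (1 / Real.pi ^ 2) *
        Real.log ((1 - α) ^ n * (1 - β) ^ (n - 1) / (α ^ n * β ^ n)))
    (hsOdd : ∀ n : ℕ,
      s (2 * n + 1) = (1 / Real.pi ^ 2) *
        Real.log ((1 - α) ^ n * (1 - β) ^ n / (α ^ (n + 1) * β ^ n))) :
    ∀ n : ℕ,
      Real.exp (-Real.pi ^ 2 * s (2 * n + 1)) *
        ∑ j ∈ Finset.range (2 * n + 1), (-1 : ℝ) ^ j * Real.exp (Real.pi ^ 2 * s j) = α := by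
  have hπ : (Real.pi : ℝ) ^ 2 ≠ 0 := by positivity
  have hα1 : 0 < 1 - α := by linarith
  have hβ1 : 0 < 1 - β := by linarith
  have hEodd : ∀ n : ℕ, Real.exp (Real.pi ^ 2 * s (2 * n + 1)) =
      (1 - α) ^ n * (1 - β) ^ n / (α ^ (n + 1) * β ^ n) := by
    intro n
    rw [hsOdd n, ← mul_assoc, mul_one_div, div_self hπ, one_mul, Real.exp_log (by positivity)]
  have hEeven : ∀ n : ℕ, Real.exp (Real.pi ^ 2 * s (2 * (n + 1))) =
      (1 - α) ^ (n + 1) * (1 - β) ^ n / (α ^ (n + 1) * β ^ (n + 1)) := by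
    intro n
    rw [hsEven (n + 1) (Nat.le_add_left 1 n), ← mul_assoc, mul_one_div, div_self hπ, one_mul,
      Nat.add_sub_cancel, Real.exp_log (by positivity)]
  have key : ∀ n : ℕ,
      ∑ j ∈ Finset.range (2 * n + 1), (-1 : ℝ) ^ j * Real.exp (Real.pi ^ 2 * s j)
        = α * ((1 - α) ^ n * (1 - β) ^ n / (α ^ (n + 1) * β ^ n)) := by
    intro n
    induction n with
    | zero =>
      simp [hs0, pow_one]
      field_simp
    | succ n ih =>
      have h1 : 2 * (n + 1) + 1 = (2 * n + 1) + 1 + 1 := by ring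
      rw [h1, Finset.sum_range_succ, Finset.sum_range_succ, ih]
      have e1 : ((-1 : ℝ)) ^ (2 * n + 1) = -1 := by
        simp [pow_succ, pow_mul]
      have e2 : ((-1 : ℝ)) ^ (2 * n + 1 + 1) = 1 := by
        simp [pow_succ, pow_mul]
      have h2 : 2 * n + 1 + 1 = 2 * (n + 1) := by ring
      rw [e1, e2, hEodd n, h2, hEeven n]
      have hαn : (α : ℝ) ^ (n + 1) ≠ 0 := by positivity
      have hβn : (β : ℝ) ^ n ≠ 0 := by positivity
      field_simp
      ring
  intro n
  rw [key n, neg_mul, Real.exp_neg, hEodd n]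
  field_simp
end
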